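/- arXiv:1110.2597 — 4 statements merged into one kernel-verified Lean document; each statement's English description precedes it below -/
import Mathlib

section
/- For H ∈ (1/2, 1) and real numbers 0 < s ≤ t, the identity 2·H·(2H-1) · ∫₀^s (s-a)^{1/2} ((t+a)^{2H-2} + (t-a)^{2H-2}) da = H · ∫₀^s (s-a)^{-1/2} ((t+a)^{2H-1} - (t-a)^{2H-1}) da holds. -/
/-!
Integrate by parts with `u a = (s - a) ^ (1/2)` and `v a = (t + a) ^ (2H - 1) - (t - a) ^ (2H - 1)`:
the boundary term `u s * v s - u 0 * v 0` vanishes because `u s = 0` and `v 0 = 0`. The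
derivatives `u'` and `v'` blow up at `a = s` (the latter only when `t = s`), but only like
`(s - a) ^ (-1/2)` and `(t - a) ^ (2H - 2)` with `2H - 2 > -1`, so they are integrable and
the integration by parts on the closed interval `[0, s]` applies directly.
-/

open MeasureTheory Set intervalIntegral

theorem intervalIntegrable_const_sub_rpow {r : ℝ} (hr : -1 < r) (c a b : ℝ) :
    IntervalIntegrable (fun x => (c - x) ^ r) volume a b := by
  simpa using (intervalIntegrable_rpow' hr (a := c - a) (b := c - b)).comp_sub_left c

theorem intervalIntegrable_const_add_rpow {r : ℝ} (hr : -1 < r) (c a b : ℝ) :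
    IntervalIntegrable (fun x => (c + x) ^ r) volume a b := by
  simpa using (intervalIntegrable_rpow' hr (a := c + a) (b := c + b)).comp_add_left c

theorem integral_rpow_mul_deriv_eq_integral_deriv_rpow_mul {α β s t : ℝ} (hα : 0 < α)
    (hβ : 0 < β) (hs : 0 ≤ s) (hst : s ≤ t) :
    α * ∫ a in (0:ℝ)..s, (s - a) ^ β * ((t + a) ^ (α - 1) + (t - a) ^ (α - 1)) =
      β * ∫ a in (0:ℝ)..s, (s - a) ^ (β - 1) * ((t + a) ^ α - (t - a) ^ α) := by
  have hu : ∀ x ∈ Ioo (min 0 s) (max 0 s),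
      HasDerivAt (fun a => (s - a) ^ β) (-(β * (s - x) ^ (β - 1))) x := by
    rw [min_eq_left hs, max_eq_right hs]
    intro x hx
    convert ((hasDerivAt_id' x).const_sub s).rpow_const (p := β)
      (Or.inl (by linarith [hx.2])) using 1
    ring
  have hv : ∀ x ∈ Ioo (min 0 s) (max 0 s), HasDerivAt (fun a => (t + a) ^ α - (t - a) ^ α)
      (α * ((t + x) ^ (α - 1) + (t - x) ^ (α - 1))) x := by
    rw [min_eq_left hs, max_eq_right hs]
    intro x hx
    exact ((((hasDerivAt_id' x).const_add t).rpow_const (p := α)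
      (Or.inl (by linarith [hx.1]))).sub
        (((hasDerivAt_id' x).const_sub t).rpow_const (p := α)
          (Or.inl (by linarith [hx.2])))).congr_deriv (by ring)
  have parts := integral_mul_deriv_eq_deriv_mul_of_hasDerivAt
    (by fun_prop (disch := positivity)) (by fun_prop (disch := positivity)) hu hv
    ((intervalIntegrable_const_sub_rpow (by linarith) s 0 s).const_mul β).neg
    (((intervalIntegrable_const_add_rpow (by linarith) t 0 s).add
      (intervalIntegrable_const_sub_rpow (by linarith) t 0 s)).const_mul α)
  simp only [sub_self, add_zero, Real.zero_rpow hβ.ne', zero_mul, mul_zero, sub_zero, zero_sub,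
    neg_mul, intervalIntegral.integral_neg, neg_neg] at parts
  rw [← intervalIntegral.integral_const_mul, ← intervalIntegral.integral_const_mul]
  convert parts using 1 <;> exact integral_congr fun x _ => by ring

theorem stmt2_general (H s t : ℝ) (hH1 : 1/2 < H) (hs : 0 < s) (hst : s ≤ t) :
    2 * H * (2*H - 1) *
      ∫ a in (0:ℝ)..s, (s - a) ^ ((1:ℝ)/2) * ((t + a) ^ (2*H - 2) + (t - a) ^ (2*H - 2))
    = H * ∫ a in (0:ℝ)..s, (s - a) ^ (-(1:ℝ)/2) * ((t + a) ^ (2*H - 1) - (t - a) ^ (2*H - 1)) := by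
  have key := integral_rpow_mul_deriv_eq_integral_deriv_rpow_mul (α := 2 * H - 1) (β := 1 / 2)
    (by linarith) one_half_pos hs.le hst
  rw [show 2 * H - 1 - 1 = 2 * H - 2 by ring, show (1:ℝ) / 2 - 1 = -(1:ℝ) / 2 by norm_num] at key
  linear_combination (2 * H) * key

theorem stmt2 (H s t : ℝ) (hH1 : 1/2 < H) (hH2 : H < 1) (hs : 0 < s) (hst : s ≤ t) :
    2 * H * (2*H - 1) *
      ∫ a in (0:ℝ)..s, (s - a) ^ ((1:ℝ)/2) * ((t + a) ^ (2*H - 2) + (t - a) ^ (2*H - 2))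
    = H * ∫ a in (0:ℝ)..s, (s - a) ^ (-(1:ℝ)/2) * ((t + a) ^ (2*H - 1) - (t - a) ^ (2*H - 1)) :=
  stmt2_general H s t hH1 hs hst
end

section
/- Let H ∈ (1/2, 1) and let R^X(t,s) = H/(2√(2π)) · ∫₀^{s∧t} ((s∧t) - a)^{2H-1} · (((s∨t)+a)^{-1/2} + ((s∨t)-a)^{-1/2}) da. Then for every c > 0 and all s, t > 0, R^X(ct, cs) = c^{2H - 1/2} · R^X(t, s). -/
/-
Substituting a = c b turns the integral for (c t, c s) into c times the integral of the kernel at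
(c m, c M, c b), where m = s ∧ t and M = s ∨ t; the kernel is homogeneous of degree 2H - 1 - 1/2,
so the total degree is 2H - 1/2.
-/

open MeasureTheory Real

noncomputable def RX (H t s : ℝ) : ℝ :=
  H / (2 * Real.sqrt (2 * Real.pi)) * ∫ a in (0:ℝ)..(min s t),
    (min s t - a) ^ (2*H - 1) * ((max s t + a) ^ (-(1:ℝ)/2) + (max s t - a) ^ (-(1:ℝ)/2))

namespace Real

-- Unlike `Real.mul_rpow`, no sign condition on `x`: for `x < 0` both sides carry the same `cos (z π)`.
theorem mul_rpow_of_pos_left {c : ℝ} (hc : 0 < c) (x z : ℝ) : (c * x) ^ z = c ^ z * x ^ z := by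
  rcases le_or_gt 0 x with hx | hx
  · exact mul_rpow hc.le hx
  · rw [rpow_def_of_neg (mul_neg_of_pos_of_neg hc hx), rpow_def_of_neg hx, rpow_def_of_pos hc,
      log_mul hc.ne' hx.ne, add_mul, exp_add, mul_assoc]

end Real

noncomputable def rxKernel (H m M a : ℝ) : ℝ :=
  (m - a) ^ (2*H - 1) * ((M + a) ^ (-(1:ℝ)/2) + (M - a) ^ (-(1:ℝ)/2))

theorem rx_eq_integral_rxKernel (H t s : ℝ) :
    RX H t s = H / (2 * Real.sqrt (2 * Real.pi)) *
      ∫ a in (0:ℝ)..(min s t), rxKernel H (min s t) (max s t) a :=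
  rfl

theorem rxKernel_mul {c : ℝ} (hc : 0 < c) (H m M a : ℝ) :
    rxKernel H (c * m) (c * M) (c * a) = c ^ (2*H - 1) * c ^ (-(1:ℝ)/2) * rxKernel H m M a := by
  simp only [rxKernel, ← mul_sub, ← mul_add, Real.mul_rpow_of_pos_left hc]
  ring

theorem integral_rxKernel_mul {c : ℝ} (hc : 0 < c) (H m M : ℝ) :
    ∫ a in (0:ℝ)..(c * m), rxKernel H (c * m) (c * M) a
      = c ^ (2*H - 1/2) * ∫ a in (0:ℝ)..m, rxKernel H m M a := by
  have hpow : c * (c ^ (2*H - 1) * c ^ (-(1:ℝ)/2)) = c ^ (2*H - 1/2) := by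
    rw [← rpow_add hc, mul_comm, ← rpow_add_one hc.ne']
    ring_nf
  calc ∫ a in (0:ℝ)..(c * m), rxKernel H (c * m) (c * M) a
      = c * ∫ b in (0:ℝ)..m, rxKernel H (c * m) (c * M) (c * b) := by
        rw [intervalIntegral.integral_comp_mul_left _ hc.ne', mul_zero, smul_eq_mul,
          mul_inv_cancel_left₀ hc.ne']
    _ = c ^ (2*H - 1/2) * ∫ a in (0:ℝ)..m, rxKernel H m M a := by
        simp only [rxKernel_mul hc, intervalIntegral.integral_const_mul, ← mul_assoc, hpow]

theorem stmt4_general (H : ℝ) (c s t : ℝ) (hc : 0 < c) :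
    RX H (c * t) (c * s) = c ^ (2*H - 1/2) * RX H t s := by
  rw [rx_eq_integral_rxKernel, rx_eq_integral_rxKernel, ← mul_min_of_nonneg _ _ hc.le,
    ← mul_max_of_nonneg _ _ hc.le, integral_rxKernel_mul hc]
  ring

theorem stmt4 (H : ℝ) (hH1 : 1/2 < H) (hH2 : H < 1) (c s t : ℝ) (hc : 0 < c)
    (hs : 0 < s) (ht : 0 < t) :
    RX H (c * t) (c * s) = c ^ (2*H - 1/2) * RX H t s :=
  stmt4_general H c s t hc
end

section
/- For H ∈ (1/2, 1) and 0 < s < t ≤ T, define T₁(t,s) = H · ∫_s^t (t-a)^{2H-1} ((t+a)^{-1/2} + (t-a)^{-1/2}) da. Then (H/(2H - 1/2)) · (t-s)^{2H - 1/2} ≤ T₁(t,s) ≤ (2H/(2H - 1/2)) · (t-s)^{2H - 1/2}. -/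
open MeasureTheory

theorem stmt6 (H T s t : ℝ) (hH1 : 1/2 < H) (hH2 : H < 1) (hs : 0 < s) (hst : s < t)
    (htT : t ≤ T) :
    (H / (2*H - 1/2)) * (t - s) ^ (2*H - 1/2) ≤
      H * ∫ a in s..t, (t - a) ^ (2*H - 1) * ((t + a) ^ (-(1:ℝ)/2) + (t - a) ^ (-(1:ℝ)/2)) ∧
    H * (∫ a in s..t, (t - a) ^ (2*H - 1) * ((t + a) ^ (-(1:ℝ)/2) + (t - a) ^ (-(1:ℝ)/2))) ≤
      (2*H / (2*H - 1/2)) * (t - s) ^ (2*H - 1/2) := by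
  set p : ℝ := 2*H - 1/2 with hp_def
  have hp : 0 < p := by simp only [hp_def]; linarith
  have ht0 : 0 < t := hs.trans hst
  have hts : 0 < t - s := by linarith
  set g : ℝ → ℝ := fun a => (t - a) ^ (p - 1) with hg_def
  set f : ℝ → ℝ := fun a => (t - a) ^ (2*H - 1) * (t + a) ^ (-(1:ℝ)/2) with hf_def
  -- integrability of g
  have hg_int : IntervalIntegrable g volume s t := by
    have h1 : IntervalIntegrable (fun x : ℝ => x ^ (p - 1)) volume (t - s) (t - t) :=
      intervalIntegral.intervalIntegrable_rpow' (by simp only [hp_def]; linarith)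
    simpa using h1.comp_sub_left t
  -- integral of g
  have hg_val : (∫ a in s..t, g a) = (t - s) ^ p / p := by
    have := intervalIntegral.integral_comp_sub_left (fun u : ℝ => u ^ (p - 1)) t
      (a := s) (b := t)
    rw [hg_def]
    rw [this]
    rw [sub_self]
    rw [integral_rpow (Or.inl (by simp only [hp_def]; linarith))]
    rw [sub_add_cancel, Real.zero_rpow hp.ne']
    ring_nf
  -- integrability of f
  have hf_int : IntervalIntegrable f volume s t := by
    apply ContinuousOn.intervalIntegrable
    apply ContinuousOn.mul
    · apply ContinuousOn.rpow_const (by fun_prop)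
      intro x hx
      right; linarith
    · apply ContinuousOn.rpow_const (by fun_prop)
      intro x hx
      left
      rw [Set.uIcc_of_le hst.le] at hx
      have h2 : (0:ℝ) < t + x := by linarith [hx.1]
      exact h2.ne'
  -- f nonneg on interval
  have hf_nonneg : ∀ x ∈ Set.Icc s t, 0 ≤ f x := by
    intro x hx
    have h1 : 0 ≤ t - x := by linarith [hx.2]
    have h2 : 0 < t + x := by linarith [hx.1]
    simp only [hf_def]
    exact mul_nonneg (Real.rpow_nonneg h1 _) (Real.rpow_nonneg h2.le _)
  -- f ≤ g on Icc
  have hfg : ∀ x ∈ Set.Icc s t, f x ≤ g x := by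
    intro x hx
    rcases eq_or_lt_of_le hx.2 with h | h
    · have : t - x = 0 := by rw [h]; ring
      simp only [hf_def, hg_def, this]
      rw [Real.zero_rpow (by linarith : 2*H - 1 ≠ 0), zero_mul]
      exact Real.rpow_nonneg le_rfl _
    · have htx : 0 < t - x := by linarith
      have htx2 : 0 < t + x := by linarith [hx.1]
      have h1 : (t + x) ^ (-(1:ℝ)/2) ≤ (t - x) ^ (-(1:ℝ)/2) := by
        apply Real.rpow_le_rpow_of_nonpos htx (by linarith [hx.1]) (by norm_num)
      have h2 : (t - x) ^ (2*H-1) * (t - x) ^ (-(1:ℝ)/2) = (t - x) ^ (p - 1) := by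
        rw [← Real.rpow_add htx]
        congr 1
        simp only [hp_def]; ring
      calc f x ≤ (t - x) ^ (2*H-1) * (t - x) ^ (-(1:ℝ)/2) := by
            apply mul_le_mul_of_nonneg_left h1 (by positivity)
        _ = g x := h2
  -- rewrite the integrand a.e. as f + g
  have hcong : (∫ a in s..t, (t - a) ^ (2*H - 1) * ((t + a) ^ (-(1:ℝ)/2) + (t - a) ^ (-(1:ℝ)/2)))
      = (∫ a in s..t, f a) + ∫ a in s..t, g a := by
    rw [← intervalIntegral.integral_add hf_int hg_int]
    apply intervalIntegral.integral_congr_ae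
    have hne : ∀ᵐ x : ℝ, x ≠ t := by
      rw [ae_iff]
      have hset : {x : ℝ | ¬ x ≠ t} = {t} := by ext x; simp
      rw [hset]
      exact Real.volume_singleton
    filter_upwards [hne] with x hx hmem
    rw [Set.uIoc_of_le hst.le] at hmem
    have htx : 0 < t - x := lt_of_le_of_ne (by linarith [hmem.2]) (by intro h; exact hx (by linarith))
    simp only [hf_def, hg_def]
    rw [mul_add]
    congr 1
    rw [← Real.rpow_add htx]
    congr 1
    simp only [hp_def]; ring
  have hf_nonneg_int : 0 ≤ ∫ a in s..t, f a :=
    intervalIntegral.integral_nonneg hst.le hf_nonneg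
  have hfg_int : (∫ a in s..t, f a) ≤ ∫ a in s..t, g a :=
    intervalIntegral.integral_mono_on hst.le hf_int hg_int hfg
  rw [hg_val] at hcong hfg_int
  rw [hcong]
  have hH0 : 0 < H := by linarith
  constructor
  · rw [div_mul_eq_mul_div, mul_div_assoc]
    have : (t - s) ^ p / p ≤ (∫ a in s..t, f a) + (t - s) ^ p / p := by linarith
    exact mul_le_mul_of_nonneg_left this hH0.le
  · have h1 : (∫ a in s..t, f a) + (t - s) ^ p / p ≤ 2 * ((t - s) ^ p / p) := by linarith
    calc H * ((∫ a in s..t, f a) + (t - s) ^ p / p) ≤ H * (2 * ((t - s) ^ p / p)) :=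
          mul_le_mul_of_nonneg_left h1 hH0.le
      _ = (2*H / p) * (t - s) ^ p := by ring
end

section
/- For all real numbers 0 ≤ s ≤ t, the function (t,s) ↦ √(t+s) − √(t−s) satisfies: for any n, any t₁,...,tₙ ≥ 0 and reals λ₁,...,λₙ, ∑_{i,j} λᵢλⱼ (√(tᵢ+tⱼ) − √|tᵢ−tⱼ|) ≥ 0; i.e., (t,s) ↦ √(t+s) − √|t−s| is a positive semidefinite kernel on [0,∞). -/
/-!
For `0 ≤ s, t` the kernel is a Gaussian mixture of Gram kernels: with `m = min t s`,
`√(t + s) - √|t - s| = ∫₀^m (t + s - 2r)^(-1/2) dr` and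
`(t + s - 2r)^(-1/2) = (2/√π) ∫₀^∞ e^{-(t - r)v²} e^{-(s - r)v²} dv`.
So, up to the factor `2/√π`, the kernel is the integral over `r > 0` of the Gram kernels
`∫₀^∞ g_t(r, v) g_s(r, v) dv` of the functions `g_t(r, v) = 1_{r < t} e^{-(t - r)v²}`
(the Fourier symbol of the heat semigroup from time `r` to `t`), each of which is positive
semidefinite, and integrals of positive semidefinite kernels are positive semidefinite.
-/

open MeasureTheory Set Real

section QuadraticForm

variable {ι α : Type*} [Fintype ι] [MeasurableSpace α] {μ : Measure α}

theorem quadForm_integral_nonneg (K : ι → ι → α → ℝ) (hK : ∀ i j, Integrable (K i j) μ)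
    (c : ι → ℝ) (hpos : ∀ᵐ x ∂μ, 0 ≤ ∑ i, ∑ j, c i * c j * K i j x) :
    0 ≤ ∑ i, ∑ j, c i * c j * ∫ x, K i j x ∂μ := by
  have hint : ∀ i j, Integrable (fun x => c i * c j * K i j x) μ := fun i j =>
    (hK i j).const_mul _
  have hsum : ∑ i, ∑ j, c i * c j * ∫ x, K i j x ∂μ
      = ∫ x, ∑ i, ∑ j, c i * c j * K i j x ∂μ := by
    rw [integral_finsetSum _ fun i _ => integrable_finsetSum _ fun j _ => hint i j]
    refine Finset.sum_congr rfl fun i _ => ?_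
    rw [integral_finsetSum _ fun j _ => hint i j]
    simp_rw [integral_const_mul]
  rw [hsum]
  exact integral_nonneg_of_ae hpos

theorem quadForm_integral_mul_nonneg (f : ι → α → ℝ)
    (hf : ∀ i j, Integrable (fun x => f i x * f j x) μ) (c : ι → ℝ) :
    0 ≤ ∑ i, ∑ j, c i * c j * ∫ x, f i x * f j x ∂μ := by
  refine quadForm_integral_nonneg _ hf c (Filter.Eventually.of_forall fun x => ?_)
  have hsq : ∑ i, ∑ j, c i * c j * (f i x * f j x) = (∑ i, c i * f i x) ^ 2 := by
    rw [sq, Finset.sum_mul_sum]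
    exact Finset.sum_congr rfl fun i _ => Finset.sum_congr rfl fun j _ => by ring
  rw [hsq]
  exact sq_nonneg _

end QuadraticForm

theorem intervalIntegrable_rpow_neg_half_sub_two_mul (a m : ℝ) :
    IntervalIntegrable (fun r : ℝ => (a - 2 * r) ^ (-(1 / 2) : ℝ)) volume 0 m := by
  have h := ((intervalIntegral.intervalIntegrable_rpow' (a := a - 2 * m) (b := a)
    (r := -(1 / 2)) (by norm_num)).comp_sub_left a).comp_mul_left (c := 2)
  simp only [sub_sub_cancel, sub_self] at h
  rw [mul_div_cancel_left₀ m two_ne_zero, zero_div] at h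
  exact h.symm

theorem integral_rpow_neg_half_sub_two_mul (a m : ℝ) :
    ∫ r in (0 : ℝ)..m, (a - 2 * r) ^ (-(1 / 2) : ℝ) = √a - √(a - 2 * m) := by
  rw [intervalIntegral.integral_comp_mul_left (fun x => (a - x) ^ (-(1 / 2) : ℝ)) two_ne_zero,
    intervalIntegral.integral_comp_sub_left (fun x : ℝ => x ^ (-(1 / 2) : ℝ)) a,
    integral_rpow (Or.inl (by norm_num)), mul_zero, sub_zero,
    show (-(1 / 2) + 1 : ℝ) = 1 / 2 by norm_num, ← sqrt_eq_rpow, ← sqrt_eq_rpow, smul_eq_mul]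
  ring

noncomputable def heatSymbol (t r v : ℝ) : ℝ := if r < t then exp (-(t - r) * v ^ 2) else 0

theorem heatSymbol_mul (t s r v : ℝ) :
    heatSymbol t r v * heatSymbol s r v =
      (Iio (min t s)).indicator (fun r => exp (-(t + s - 2 * r) * v ^ 2)) r := by
  unfold heatSymbol
  by_cases ht : r < t <;> by_cases hs : r < s <;>
    simp only [ht, hs, ↓reduceIte, indicator, mem_Iio, lt_min_iff, and_self, and_true,
      and_false, mul_zero, zero_mul, ← exp_add]
  ring_nf

theorem integrableOn_heatSymbol_mul (t s r : ℝ) :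
    IntegrableOn (fun v => heatSymbol t r v * heatSymbol s r v) (Ioi 0) := by
  simp only [heatSymbol_mul]
  by_cases h : r < min t s
  · have hpos : 0 < t + s - 2 * r := by rw [lt_min_iff] at h; linarith
    simpa [indicator, h] using (integrable_exp_neg_mul_sq hpos).integrableOn
  · simp [indicator, h]

theorem integral_heatSymbol_mul (t s r : ℝ) :
    ∫ v in Ioi 0, heatSymbol t r v * heatSymbol s r v =
      (Iio (min t s)).indicator (fun r => √π / 2 * (t + s - 2 * r) ^ (-(1 / 2) : ℝ)) r := by
  simp only [heatSymbol_mul]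
  by_cases h : r < min t s
  · have hpos : 0 < t + s - 2 * r := by rw [lt_min_iff] at h; linarith
    simp only [indicator, mem_Iio, h, if_true, integral_gaussian_Ioi]
    rw [sqrt_div pi_pos.le, rpow_neg hpos.le, ← sqrt_eq_rpow]
    ring
  · simp [indicator, h]

theorem integrableOn_integral_heatSymbol_mul (t s : ℝ) :
    IntegrableOn (fun r => ∫ v in Ioi 0, heatSymbol t r v * heatSymbol s r v) (Ioi 0) := by
  simp only [integral_heatSymbol_mul]
  rw [IntegrableOn, integrable_indicator_iff measurableSet_Iio, IntegrableOn,
    Measure.restrict_restrict measurableSet_Iio, Iio_inter_Ioi]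
  exact ((intervalIntegrable_rpow_neg_half_sub_two_mul _ _).1.mono_set
    Ioo_subset_Ioc_self).const_mul _

theorem sqrt_add_sub_sqrt_abs_sub_eq_integral {t s : ℝ} (ht : 0 ≤ t) (hs : 0 ≤ s) :
    √(t + s) - √|t - s| =
      2 / √π * ∫ r in Ioi 0, ∫ v in Ioi 0, heatSymbol t r v * heatSymbol s r v := by
  have habs : |t - s| = t + s - 2 * min t s := by
    rcases le_total t s with h | h
    · rw [abs_of_nonpos (by linarith), min_eq_left h]; ring
    · rw [abs_of_nonneg (by linarith), min_eq_right h]; ring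
  simp only [integral_heatSymbol_mul]
  rw [setIntegral_indicator measurableSet_Iio, Ioi_inter_Iio, integral_const_mul,
    ← integral_Ioc_eq_integral_Ioo, ← intervalIntegral.integral_of_le (le_min ht hs),
    integral_rpow_neg_half_sub_two_mul, habs]
  have : √π ≠ 0 := (sqrt_pos.mpr pi_pos).ne'
  field_simp

theorem stmt10 (n : ℕ) (t : Fin n → ℝ) (ht : ∀ i, 0 ≤ t i) (lam : Fin n → ℝ) :
    0 ≤ ∑ i, ∑ j, lam i * lam j * (Real.sqrt (t i + t j) - Real.sqrt |t i - t j|) := by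
  simp_rw [sqrt_add_sub_sqrt_abs_sub_eq_integral (ht _) (ht _), mul_left_comm _ (2 / √π),
    ← Finset.mul_sum]
  refine mul_nonneg (by positivity) (quadForm_integral_nonneg _
    (fun i j => integrableOn_integral_heatSymbol_mul (t i) (t j)) lam
    (Filter.Eventually.of_forall fun r => ?_))
  exact quadForm_integral_mul_nonneg _ (fun i j => integrableOn_heatSymbol_mul _ _ r) lam
end
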